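/- (Main theorem.) Fix a positive definite real k×k matrix Q. An operator f : ℝ^k → ℝ^k is linear if and only if there exist an integer m ≥ 1, a matrix A ∈ ℝ^{m×k}, a linear map b : ℝ^k → ℝ^m, and a linear map c : ℝ^k → ℝ^k such that the system Ax = b(v) is solvable for every v ∈ ℝ^k and, for every v ∈ ℝ^k, f(v) is the unique minimizer of ‖c(v) − x‖_Q² over {x ∈ ℝ^k : Ax = b(v)}. -/

import Mathlib

/-!
A point `x` of the affine space `{x | A x = b}` minimises `‖c - x‖_Q²` there exactly when the
residual `c - x` is `Q`-orthogonal to `ker A`, and for positive definite `Q` such a point is unique.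
The orthogonality condition is linear in `(b, c, x)`, so sums and multiples of solutions are
solutions of the summed and scaled problems; uniqueness then forces `v ↦ f v` to be linear
when `b` and `c` are. Conversely a linear `f` is the solution of the unconstrained problem
(`A = 0`, `b = 0`) with `c = f`.
-/

open Matrix

namespace Matrix

variable {m n : Type*} [Fintype n]

lemma IsSymm.dotProduct_mulVec_comm {R : Type*} [CommSemiring R] {Q : Matrix n n R}
    (hQ : Q.IsSymm) (v w : n → R) : v ⬝ᵥ Q *ᵥ w = w ⬝ᵥ Q *ᵥ v := by
  rw [dotProduct_mulVec, ← mulVec_transpose, hQ.eq, dotProduct_comm]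

variable {Q : Matrix n n ℝ}

lemma IsSymm.dotProduct_mulVec_sub_smul (hQ : Q.IsSymm) (w z : n → ℝ) (t : ℝ) :
    (w - t • z) ⬝ᵥ Q *ᵥ (w - t • z)
      = w ⬝ᵥ Q *ᵥ w - 2 * t * (w ⬝ᵥ Q *ᵥ z) + t ^ 2 * (z ⬝ᵥ Q *ᵥ z) := by
  simp only [mulVec_sub, mulVec_smul, sub_dotProduct, dotProduct_sub, smul_dotProduct,
    dotProduct_smul, smul_eq_mul, hQ.dotProduct_mulVec_comm z w]
  ring

lemma IsSymm.dotProduct_mulVec_eq_zero_of_forall_le (hQ : Q.IsSymm) {w z : n → ℝ}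
    (h : ∀ t : ℝ, w ⬝ᵥ Q *ᵥ w ≤ (w - t • z) ⬝ᵥ Q *ᵥ (w - t • z)) : w ⬝ᵥ Q *ᵥ z = 0 := by
  have hdiscrim := discrim_le_zero (a := z ⬝ᵥ Q *ᵥ z) (b := -2 * (w ⬝ᵥ Q *ᵥ z)) (c := 0)
    fun t => by linarith [h t, hQ.dotProduct_mulVec_sub_smul w z t]
  rw [discrim] at hdiscrim
  nlinarith [sq_nonneg (w ⬝ᵥ Q *ᵥ z)]

lemma PosSemidef.le_dotProduct_mulVec_sub (hQ : Q.PosSemidef) {w z : n → ℝ}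
    (h : w ⬝ᵥ Q *ᵥ z = 0) : w ⬝ᵥ Q *ᵥ w ≤ (w - z) ⬝ᵥ Q *ᵥ (w - z) := by
  have hz : 0 ≤ z ⬝ᵥ Q *ᵥ z := by simpa using hQ.dotProduct_mulVec_nonneg z
  have hexpand := (isHermitian_iff_isSymm.mp hQ.1).dotProduct_mulVec_sub_smul w z 1
  rw [one_smul] at hexpand
  rw [hexpand, h]
  linarith

def IsLeastSquaresSol (Q : Matrix n n ℝ) (A : Matrix m n ℝ) (b : m → ℝ) (c x : n → ℝ) : Prop :=
  A *ᵥ x = b ∧ ∀ z, A *ᵥ z = b → (c - x) ⬝ᵥ Q *ᵥ (c - x) ≤ (c - z) ⬝ᵥ Q *ᵥ (c - z)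

variable {A : Matrix m n ℝ} {b b' : m → ℝ} {c c' x y : n → ℝ}

theorem isLeastSquaresSol_iff (hQ : Q.PosSemidef) :
    IsLeastSquaresSol Q A b c x ↔ A *ᵥ x = b ∧ ∀ z, A *ᵥ z = 0 → (c - x) ⬝ᵥ Q *ᵥ z = 0 := by
  refine ⟨fun ⟨hx, hmin⟩ => ⟨hx, fun z hz => ?_⟩, fun ⟨hx, horth⟩ => ⟨hx, fun z hz => ?_⟩⟩
  · refine (isHermitian_iff_isSymm.mp hQ.1).dotProduct_mulVec_eq_zero_of_forall_le fun t => ?_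
    have hfeas : A *ᵥ (x + t • z) = b := by rw [mulVec_add, mulVec_smul, hz, smul_zero, add_zero, hx]
    simpa only [sub_add_eq_sub_sub] using hmin _ hfeas
  · have hker : A *ᵥ (z - x) = 0 := by rw [mulVec_sub, hz, hx, sub_self]
    simpa only [sub_sub_sub_cancel_right] using hQ.le_dotProduct_mulVec_sub (horth _ hker)

theorem isLeastSquaresSol_self (hQ : Q.PosSemidef) (hc : A *ᵥ c = b) :
    IsLeastSquaresSol Q A b c c :=
  ⟨hc, fun z _ => by simpa using hQ.dotProduct_mulVec_nonneg (c - z)⟩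

namespace IsLeastSquaresSol

theorem add (hQ : Q.PosSemidef) (hx : IsLeastSquaresSol Q A b c x)
    (hy : IsLeastSquaresSol Q A b' c' y) : IsLeastSquaresSol Q A (b + b') (c + c') (x + y) := by
  obtain ⟨hx, hxorth⟩ := (isLeastSquaresSol_iff hQ).mp hx
  obtain ⟨hy, hyorth⟩ := (isLeastSquaresSol_iff hQ).mp hy
  refine (isLeastSquaresSol_iff hQ).mpr ⟨by rw [mulVec_add, hx, hy], fun z hz => ?_⟩
  rw [add_sub_add_comm, add_dotProduct, hxorth z hz, hyorth z hz, add_zero]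

theorem smul (hQ : Q.PosSemidef) (hx : IsLeastSquaresSol Q A b c x) (r : ℝ) :
    IsLeastSquaresSol Q A (r • b) (r • c) (r • x) := by
  obtain ⟨hx, hxorth⟩ := (isLeastSquaresSol_iff hQ).mp hx
  refine (isLeastSquaresSol_iff hQ).mpr ⟨by rw [mulVec_smul, hx], fun z hz => ?_⟩
  rw [← smul_sub, smul_dotProduct, hxorth z hz, smul_zero]

theorem unique (hQ : Q.PosDef) (hx : IsLeastSquaresSol Q A b c x)
    (hy : IsLeastSquaresSol Q A b c y) : x = y := by
  obtain ⟨hx, hxorth⟩ := (isLeastSquaresSol_iff hQ.posSemidef).mp hx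
  obtain ⟨hy, hyorth⟩ := (isLeastSquaresSol_iff hQ.posSemidef).mp hy
  have hker : A *ᵥ (x - y) = 0 := by rw [mulVec_sub, hx, hy, sub_self]
  have hnorm : (x - y) ⬝ᵥ Q *ᵥ (x - y) = 0 := by
    calc (x - y) ⬝ᵥ Q *ᵥ (x - y) = (c - y) ⬝ᵥ Q *ᵥ (x - y) - (c - x) ⬝ᵥ Q *ᵥ (x - y) := by
          rw [← sub_dotProduct, sub_sub_sub_cancel_left]
      _ = 0 := by rw [hyorth _ hker, hxorth _ hker, sub_zero]
  by_contra hne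
  simpa [hnorm] using hQ.dotProduct_mulVec_pos (sub_ne_zero.mpr hne)

end IsLeastSquaresSol

end Matrix

/-- Main theorem: an operator `f : ℝ^k → ℝ^k` is linear if and
only if it arises from a least square approximation problem with linear
constraints: there are `m ≥ 1`, `A ∈ ℝ^{m×k}` and linear maps `b`, `c` such
that `Ax = b(v)` is always solvable and `f(v)` is the unique minimizer of
`‖c(v) − x‖_Q²` over `{x : Ax = b(v)}`. -/
theorem linear_iff_least_square (k : ℕ)
    (Q : Matrix (Fin k) (Fin k) ℝ) (hQ : Q.PosDef)
    (f : (Fin k → ℝ) → (Fin k → ℝ)) :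
    IsLinearMap ℝ f ↔
      ∃ m : ℕ, 0 < m ∧
        ∃ (A : Matrix (Fin m) (Fin k) ℝ)
          (b : (Fin k → ℝ) →ₗ[ℝ] (Fin m → ℝ))
          (c : (Fin k → ℝ) →ₗ[ℝ] (Fin k → ℝ)),
          (∀ v : Fin k → ℝ, ∃ x : Fin k → ℝ, A.mulVec x = b v) ∧
          (∀ v : Fin k → ℝ,
            A.mulVec (f v) = b v ∧
            (∀ x : Fin k → ℝ, A.mulVec x = b v →
              (c v - f v) ⬝ᵥ Q.mulVec (c v - f v)
                ≤ (c v - x) ⬝ᵥ Q.mulVec (c v - x)) ∧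
            (∀ x : Fin k → ℝ,
              (A.mulVec x = b v ∧
                ∀ z : Fin k → ℝ, A.mulVec z = b v →
                  (c v - x) ⬝ᵥ Q.mulVec (c v - x)
                    ≤ (c v - z) ⬝ᵥ Q.mulVec (c v - z)) → x = f v)) := by
  constructor
  · intro hf
    refine ⟨1, Nat.one_pos, 0, 0, IsLinearMap.mk' f hf, fun v => ⟨0, by simp⟩, fun v => ?_⟩
    have hsol : IsLeastSquaresSol Q (0 : Matrix (Fin 1) (Fin k) ℝ) 0 (f v) (f v) :=
      isLeastSquaresSol_self hQ.posSemidef (zero_mulVec _)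
    exact ⟨hsol.1, hsol.2, fun x hx => IsLeastSquaresSol.unique hQ hx hsol⟩
  · rintro ⟨m, -, A, b, c, -, hmin⟩
    have hsol (v) : IsLeastSquaresSol Q A (b v) (c v) (f v) := ⟨(hmin v).1, (hmin v).2.1⟩
    refine ⟨fun u v => ((hmin (u + v)).2.2 _ ?_).symm, fun r v => ((hmin (r • v)).2.2 _ ?_).symm⟩
    · rw [map_add, map_add]
      exact (hsol u).add hQ.posSemidef (hsol v)
    · rw [map_smul, map_smul]
      exact (hsol v).smul hQ.posSemidef r
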